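/- Let μ be an atomless probability measure on ℝ with cumulative distribution function F, let N ≥ 1, and let μ_N be the probability measure on ℝ^N with density (t_1, …, t_N) ↦ N^N · 1_{t_1 ≥ ⋯ ≥ t_N} · ∏_{i=1}^N F(t_N)/F(t_i) with respect to μ^{⊗N} (density 0 where some F(t_i) = 0). Then for every real t with F(t) > 0 and every integer p with 0 ≤ p ≤ N − 1, the μ_N-measure of the set of vectors having exactly p coordinates strictly greater than t equals (N^p / p!) · F(t)^N · (−log F(t))^p. -/

import Mathlib

open MeasureTheory
open scoped ENNReal

/-- The cumulative distribution function of a measure on `ℝ`. -/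
noncomputable def cdf' (μ : Measure ℝ) : ℝ → ℝ := fun x => (μ (Set.Iic x)).toReal

/-!
Write `F = cdf μ`. As `μ` has no atoms, `F` pushes `μ` forward to Lebesgue measure on `(0, 1]`,
and for `μ`-almost every `x` we have `F y < F x` whenever `y < x`. Hence almost surely `v` is
antitone iff `F ∘ v` is, and `t < vᵢ` iff `F t < F vᵢ`, so the measure in question is `N ^ N`
times the integral of `∏ᵢ uᵢ⁻¹ · u_N ^ N` over the antitone `u ∈ (0, 1]^N` with exactly `p`
coordinates above `a = F t`. Integrating out the largest coordinate again and again, the `N - p`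
coordinates below `a` contribute `a ^ N / N ^ (N - p)` (a factor `1 / N` each, from
`∫₀^c x ^ (N - 1) dx = c ^ N / N`), and the `p` coordinates above `a` contribute the volume
`(-log a) ^ p / p!` of a simplex in the variables `log uᵢ`.
-/

open Set ProbabilityTheory Finset

namespace ProbabilityTheory

variable (μ : Measure ℝ) [IsProbabilityMeasure μ]

lemma cdf'_eq_cdf : cdf' μ = cdf μ := funext fun x => (cdf_eq_real μ x).symm

variable [NullSingletonClass μ]

lemma continuous_cdf : Continuous (cdf μ) := by
  refine continuous_iff_continuousAt.2 fun x => ?_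
  rw [(monotone_cdf μ).continuousAt_iff_leftLim_eq_rightLim, StieltjesFunction.rightLim_eq]
  have h := (cdf μ).measure_singleton x
  rw [measure_cdf, measure_singleton, eq_comm, ENNReal.ofReal_eq_zero, sub_nonpos] at h
  exact le_antisymm ((monotone_cdf μ).leftLim_le le_rfl) h

lemma measure_cdf_le {u : ℝ} (hu0 : 0 ≤ u) (hu1 : u < 1) :
    μ {x | cdf μ x ≤ u} = ENNReal.ofReal u := by
  set S := {x | cdf μ x ≤ u}
  rcases S.eq_empty_or_nonempty with hS | hS
  · obtain rfl : u = 0 := by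
      refine le_antisymm (not_lt.1 fun hu => ?_) hu0
      obtain ⟨x, hx⟩ := ((tendsto_cdf_atBot μ).eventually_lt_const hu).exists
      exact hS.subset hx.le
    rw [hS, measure_empty, ENNReal.ofReal_zero]
  have hbdd : BddAbove S := by
    obtain ⟨w, hw⟩ := ((tendsto_cdf_atTop μ).eventually_const_lt hu1).exists
    exact ⟨w, fun x hx => not_lt.1 fun hwx => (hw.trans_le (monotone_cdf μ hwx.le)).not_ge hx⟩
  set c := sSup S
  have hc : cdf μ c ≤ u := (isClosed_le (continuous_cdf μ) continuous_const).csSup_mem hS hbdd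
  have hS_eq : S = Iic c :=
    Subset.antisymm (fun x hx => le_csSup hbdd hx) fun x hx => (monotone_cdf μ hx).trans hc
  have hcu : u ≤ cdf μ c :=
    ge_of_tendsto ((continuous_cdf μ).continuousAt.tendsto.mono_left
      (nhdsWithin_le_nhds (s := Ioi c)))
      (eventually_nhdsWithin_of_forall fun x (hx : c < x) =>
        (not_le.1 fun hxu => hx.not_ge (le_csSup hbdd hxu)).le)
  rw [hS_eq, ← ofReal_cdf, le_antisymm hc hcu]

theorem map_cdf : μ.map (cdf μ) = volume.restrict (Ioc 0 1) := by
  refine Measure.ext_of_Iic _ _ fun u => ?_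
  rw [Measure.map_apply (continuous_cdf μ).measurable measurableSet_Iic,
    Measure.restrict_apply measurableSet_Iic, inter_comm, Ioc_inter_Iic, Real.volume_Ioc,
    sub_zero]
  show μ {x | cdf μ x ≤ u} = _
  rcases lt_or_ge u 0 with hu | hu
  · have : {x | cdf μ x ≤ u} = ∅ :=
      eq_empty_of_forall_notMem fun x hx => (hu.trans_le (cdf_nonneg μ x)).not_ge hx
    rw [this, measure_empty, ENNReal.ofReal_of_nonpos ((min_le_right _ _).trans hu.le)]
  rcases lt_or_ge u 1 with hu1 | hu1
  · rw [measure_cdf_le μ hu hu1, min_eq_right hu1.le]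
  · have : {x | cdf μ x ≤ u} = univ := eq_univ_of_forall fun x => (cdf_le_one μ x).trans hu1
    rw [this, measure_univ, min_eq_left hu1, ENNReal.ofReal_one]

lemma measure_cdf_preimage_singleton (c : ℝ) : μ (cdf μ ⁻¹' {c}) = 0 := by
  rw [← Measure.map_apply (continuous_cdf μ).measurable (measurableSet_singleton c), map_cdf]
  exact measure_singleton c

lemma ae_le_of_cdf_le : ∀ᵐ x ∂μ, ∀ y, cdf μ x ≤ cdf μ y → x ≤ y := by
  -- a bad point `x` lies in the level set of `cdf μ` through a rational left of `x`
  refine measure_mono_null (fun x hx => ?_)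
    (measure_iUnion_null fun q : ℚ => measure_cdf_preimage_singleton μ (cdf μ q))
  obtain ⟨y, hxy, hyx⟩ : ∃ y, cdf μ x ≤ cdf μ y ∧ y < x := by simpa using hx
  obtain ⟨q, hyq, hqx⟩ := exists_rat_btwn hyx
  exact mem_iUnion.2 ⟨q, le_antisymm (hxy.trans (monotone_cdf μ hyq.le))
    (monotone_cdf μ hqx.le)⟩

end ProbabilityTheory

lemma lintegral_pi_eq_lintegral_cons {α : Type*} [MeasurableSpace α] (ν : Measure α)
    [SigmaFinite ν] {n : ℕ} {f : (Fin (n + 1) → α) → ℝ≥0∞} (hf : Measurable f) :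
    ∫⁻ u, f u ∂(Measure.pi fun _ => ν) =
      ∫⁻ x, ∫⁻ w, f (Fin.cons x w) ∂(Measure.pi fun _ => ν) ∂ν := by
  have e := (measurePreserving_piFinSuccAbove (fun _ : Fin (n + 1) => ν) 0).symm
  rw [← e.lintegral_comp hf, lintegral_prod _ (by fun_prop)]
  simp [MeasurableEquiv.piFinSuccAbove_symm_apply, Fin.consEquiv]

lemma lintegral_pi_fin_one {α : Type*} [MeasurableSpace α] (ν : Measure α)
    (f : (Fin 1 → α) → ℝ≥0∞) :
    ∫⁻ u, f u ∂(Measure.pi fun _ => ν) = ∫⁻ x, f (fun _ => x) ∂ν :=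
  ((measurePreserving_funUnique ν (Fin 1)).symm.lintegral_comp_emb
    (MeasurableEquiv.measurableEmbedding _) f).symm

lemma lintegral_Ioc_ofReal_eq_ofReal_integral {f : ℝ → ℝ} {a b : ℝ} (hab : a ≤ b)
    (hf : ContinuousOn f (Icc a b)) (h0 : ∀ x ∈ Ioc a b, 0 ≤ f x) :
    ∫⁻ x in Ioc a b, ENNReal.ofReal (f x) = ENNReal.ofReal (∫ x in a..b, f x) := by
  rw [intervalIntegral.integral_of_le hab, ofReal_integral_eq_lintegral_ofReal
    (hf.integrableOn_Icc.mono_set Ioc_subset_Icc_self)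
    ((ae_restrict_iff' measurableSet_Ioc).2 (ae_of_all _ h0))]

lemma lintegral_Ioc_inv_mul_pow {N : ℕ} (hN : 0 < N) {c : ℝ} (hc : 0 ≤ c) :
    ∫⁻ x in Ioc 0 c, ENNReal.ofReal (x⁻¹ * x ^ N) = ENNReal.ofReal (c ^ N / N) := by
  obtain ⟨M, rfl⟩ : ∃ M, N = M + 1 := ⟨N - 1, by omega⟩
  have h : ∀ x ∈ Ioc (0 : ℝ) c, ENNReal.ofReal (x⁻¹ * x ^ (M + 1)) = ENNReal.ofReal (x ^ M) :=
    fun x hx => by rw [pow_succ', inv_mul_cancel_left₀ hx.1.ne']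
  rw [setLIntegral_congr_fun measurableSet_Ioc h, lintegral_Ioc_ofReal_eq_ofReal_integral hc
    (continuous_pow M).continuousOn fun x hx => pow_nonneg hx.1.le M, integral_pow]
  norm_num

lemma lintegral_Ioc_inv_mul_log_sub_pow (q : ℕ) {a b : ℝ} (ha : 0 < a) (hab : a ≤ b) :
    ∫⁻ x in Ioc a b, ENNReal.ofReal (x⁻¹ * (Real.log x - Real.log a) ^ q) =
      ENNReal.ofReal ((Real.log b - Real.log a) ^ (q + 1) / (q + 1)) := by
  have hpos : ∀ x ∈ uIcc a b, 0 < x := fun x hx =>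
    ha.trans_le (by rw [uIcc_of_le hab] at hx; exact hx.1)
  have hlog : ∀ x ∈ uIcc a b, HasDerivAt (fun x => Real.log x - Real.log a) x⁻¹ x :=
    fun x hx => (Real.hasDerivAt_log (hpos x hx).ne').sub_const _
  have hinv : ContinuousOn (fun x : ℝ => x⁻¹) (uIcc a b) :=
    continuousOn_inv₀.mono fun x hx => (hpos x hx).ne'
  have hsubst := intervalIntegral.integral_comp_mul_deriv hlog hinv (continuous_pow q)
  simp only [Function.comp_def, sub_self, integral_pow, zero_pow q.succ_ne_zero, sub_zero]
    at hsubst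
  rw [lintegral_Ioc_ofReal_eq_ofReal_integral hab, ← hsubst]
  · simp only [mul_comm]
  · rw [← uIcc_of_le hab]
    exact hinv.mul (((Real.continuousOn_log.mono fun x hx => (hpos x hx).ne').sub
      continuousOn_const).pow q)
  · exact fun x hx => mul_nonneg (inv_nonneg.2 (ha.trans hx.1).le)
      (pow_nonneg (sub_nonneg.2 (Real.log_le_log ha hx.1.le)) q)

lemma lintegral_Ioc_inv_mul_pow_div {N : ℕ} (hN : 0 < N) {c : ℝ} (hc : 0 ≤ c) (K : ℝ) :
    ∫⁻ x in Ioc 0 c, ENNReal.ofReal x⁻¹ * ENNReal.ofReal (x ^ N / K) =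
      ENNReal.ofReal (c ^ N / (N * K)) := by
  have h : ∀ x ∈ Ioc (0 : ℝ) c, ENNReal.ofReal x⁻¹ * ENNReal.ofReal (x ^ N / K) =
      ENNReal.ofReal (x⁻¹ * x ^ N) * ENNReal.ofReal K⁻¹ := fun x hx => by
    rw [← ENNReal.ofReal_mul (inv_nonneg.2 hx.1.le),
      ← ENNReal.ofReal_mul (mul_nonneg (inv_nonneg.2 hx.1.le) (pow_nonneg hx.1.le N)),
      div_eq_mul_inv, mul_assoc]
  rw [setLIntegral_congr_fun measurableSet_Ioc h, lintegral_mul_const' _ _ ENNReal.ofReal_ne_top,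
    lintegral_Ioc_inv_mul_pow hN hc, ← ENNReal.ofReal_mul (by positivity), div_mul_eq_div_div,
    div_eq_mul_inv _ K]

lemma lintegral_Ioc_inv_mul_log_sub_pow_div_factorial (q : ℕ) {a b : ℝ} (ha : 0 < a)
    (hab : a ≤ b) (C : ℝ) :
    ∫⁻ x in Ioc a b,
        ENNReal.ofReal x⁻¹ * ENNReal.ofReal ((Real.log x - Real.log a) ^ q / q.factorial * C) =
      ENNReal.ofReal ((Real.log b - Real.log a) ^ (q + 1) / (q + 1).factorial * C) := by
  have h : ∀ x ∈ Ioc a b,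
      ENNReal.ofReal x⁻¹ * ENNReal.ofReal ((Real.log x - Real.log a) ^ q / q.factorial * C) =
        ENNReal.ofReal (x⁻¹ * (Real.log x - Real.log a) ^ q) *
          ENNReal.ofReal (C / q.factorial) := fun x hx => by
    have hlog : 0 ≤ Real.log x - Real.log a := sub_nonneg.2 (Real.log_le_log ha hx.1.le)
    rw [← ENNReal.ofReal_mul (inv_nonneg.2 (ha.trans hx.1).le),
      ← ENNReal.ofReal_mul (mul_nonneg (inv_nonneg.2 (ha.trans hx.1).le) (pow_nonneg hlog q))]
    congr 1
    ring
  rw [setLIntegral_congr_fun measurableSet_Ioc h, lintegral_mul_const' _ _ ENNReal.ofReal_ne_top,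
    lintegral_Ioc_inv_mul_log_sub_pow q ha hab, ← ENNReal.ofReal_mul (div_nonneg
      (pow_nonneg (sub_nonneg.2 (Real.log_le_log ha hab)) _) (by positivity)),
    Nat.factorial_succ]
  congr 1
  push_cast
  field_simp

local notation "ν" => volume.restrict (Ioc (0 : ℝ) 1)

/-- The exponent `N` is independent of the length `n + 1`, so that `orderedWeight_cons` can peel
off one coordinate at a time. -/
noncomputable def orderedWeight (N : ℕ) {n : ℕ} (u : Fin (n + 1) → ℝ) : ℝ≥0∞ :=
  ENNReal.ofReal ((∏ i, (u i)⁻¹) * u (Fin.last n) ^ N)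

section OrderedWeight

variable (N : ℕ) {n : ℕ}

lemma measurable_orderedWeight : Measurable (orderedWeight N (n := n)) := by
  unfold orderedWeight; fun_prop

lemma orderedWeight_cons {x : ℝ} (hx : 0 ≤ x) (w : Fin (n + 1) → ℝ) :
    orderedWeight N (Fin.cons x w) = ENNReal.ofReal x⁻¹ * orderedWeight N w := by
  rw [orderedWeight, orderedWeight, Fin.prod_univ_succ, ← ENNReal.ofReal_mul (inv_nonneg.2 hx),
    ← Fin.succ_last, Fin.cons_succ, Fin.cons_zero, mul_assoc]
  simp only [Fin.cons_succ]

lemma antitone_cons_iff {α : Type*} [Preorder α] {x : α} {w : Fin (n + 1) → α} :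
    Antitone (Fin.cons x w : Fin (n + 2) → α) ↔ w 0 ≤ x ∧ Antitone w :=
  antitone_vecCons

lemma indicator_cons_antitone_le {c x : ℝ} (hx : 0 < x) (w : Fin (n + 1) → ℝ) :
    {u : Fin (n + 2) → ℝ | Antitone u ∧ u 0 ≤ c}.indicator (orderedWeight N) (Fin.cons x w) =
      (Ioc 0 c).indicator (fun y => ENNReal.ofReal y⁻¹) x *
        {u : Fin (n + 1) → ℝ | Antitone u ∧ u 0 ≤ x}.indicator (orderedWeight N) w := by
  have hmem : Fin.cons x w ∈ {u : Fin (n + 2) → ℝ | Antitone u ∧ u 0 ≤ c} ↔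
      x ∈ Ioc 0 c ∧ w ∈ {u : Fin (n + 1) → ℝ | Antitone u ∧ u 0 ≤ x} := by
    simp only [mem_ofPred_eq, Set.mem_Ioc, antitone_cons_iff, Fin.cons_zero, hx, true_and]
    tauto
  simp only [indicator_apply, hmem, ite_zero_mul_ite_zero, orderedWeight_cons N hx.le]

lemma indicator_cons_antitone_card {a b x : ℝ} (hx : 0 ≤ x) (q : ℕ) (w : Fin (n + 1) → ℝ) :
    {u : Fin (n + 2) → ℝ | Antitone u ∧ u 0 ≤ b ∧ #{i | a < u i} = q + 1}.indicator
        (orderedWeight N) (Fin.cons x w) =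
      (Ioc a b).indicator (fun y => ENNReal.ofReal y⁻¹) x *
        {u : Fin (n + 1) → ℝ | Antitone u ∧ u 0 ≤ x ∧ #{i | a < u i} = q}.indicator
          (orderedWeight N) w := by
  have hcount : #{i | a < (Fin.cons x w : Fin (n + 2) → ℝ) i} =
      (if a < x then 1 else 0) + #{i | a < w i} := by
    rw [Fin.card_filter_univ_succ']
    simp only [Fin.cons_zero, Fin.cons_succ]
  have hmem : Fin.cons x w ∈
        {u : Fin (n + 2) → ℝ | Antitone u ∧ u 0 ≤ b ∧ #{i | a < u i} = q + 1} ↔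
      x ∈ Ioc a b ∧ w ∈ {u : Fin (n + 1) → ℝ | Antitone u ∧ u 0 ≤ x ∧ #{i | a < u i} = q} := by
    simp only [mem_ofPred_eq, Set.mem_Ioc, antitone_cons_iff, Fin.cons_zero, hcount]
    constructor
    · rintro ⟨⟨h0, hw⟩, hxb, hc⟩
      have hax : a < x := not_le.1 fun hxa => by
        have : #{i | a < w i} = 0 := card_eq_zero.2 <| filter_eq_empty_iff.2 fun i _ =>
          not_lt.2 ((hw (Fin.zero_le i)).trans (h0.trans hxa))
        simp [this, hxa.not_gt] at hc
      simp only [hax, if_true] at hc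
      exact ⟨⟨hax, hxb⟩, hw, h0, by omega⟩
    · rintro ⟨⟨hax, hxb⟩, hw, h0, hc⟩
      simp only [hax, if_true, hc]
      exact ⟨⟨h0, hw⟩, hxb, add_comm 1 q⟩
  simp only [indicator_apply, hmem, ite_zero_mul_ite_zero, orderedWeight_cons N hx]

end OrderedWeight

lemma measurableSet_antitone_le {n : ℕ} (c : ℝ) :
    MeasurableSet {u : Fin (n + 1) → ℝ | Antitone u ∧ u 0 ≤ c} :=
  isClosed_antitone.measurableSet.inter (measurableSet_le (measurable_pi_apply 0) measurable_const)

lemma measurable_card_filter_lt {ι : Type*} [Fintype ι] (a : ℝ) :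
    Measurable fun u : ι → ℝ => #{i | a < u i} := by
  simp_rw [card_filter]
  exact Finset.measurable_sum _ fun i _ =>
    Measurable.ite (measurableSet_lt measurable_const (measurable_pi_apply i)) measurable_const
      measurable_const

lemma measurableSet_antitone_card {n : ℕ} (a b : ℝ) (q : ℕ) :
    MeasurableSet {u : Fin (n + 1) → ℝ | Antitone u ∧ u 0 ≤ b ∧ #{i | a < u i} = q} := by
  simp only [ofPred_and]
  exact isClosed_antitone.measurableSet.inter
    ((measurableSet_le (measurable_pi_apply 0) measurable_const).inter
      (measurable_card_filter_lt a (measurableSet_singleton q)))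

theorem lintegral_antitone_le_orderedWeight {N : ℕ} (hN : 0 < N) (n : ℕ) {c : ℝ} (hc0 : 0 ≤ c)
    (hc1 : c ≤ 1) :
    ∫⁻ u, {u : Fin (n + 1) → ℝ | Antitone u ∧ u 0 ≤ c}.indicator (orderedWeight N) u
        ∂(Measure.pi fun _ => ν) = ENNReal.ofReal (c ^ N / N ^ (n + 1)) := by
  induction n generalizing c with
  | zero =>
    calc _ = ∫⁻ x, (Ioc 0 c).indicator (fun y => ENNReal.ofReal (y⁻¹ * y ^ N)) x ∂ν := by
          rw [lintegral_pi_fin_one]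
          refine setLIntegral_congr_fun measurableSet_Ioc fun x hx => ?_
          simp [indicator_apply, orderedWeight, antitone_const, hx.1]
      _ = _ := by
          rw [lintegral_indicator measurableSet_Ioc,
            Measure.restrict_restrict_of_subset (Ioc_subset_Ioc le_rfl hc1),
            lintegral_Ioc_inv_mul_pow hN hc0]
          norm_num
  | succ n ih =>
    rw [lintegral_pi_eq_lintegral_cons _
      ((measurable_orderedWeight N).indicator (measurableSet_antitone_le c))]
    calc _ = ∫⁻ x, (Ioc 0 c).indicator
          (fun y => ENNReal.ofReal y⁻¹ * ENNReal.ofReal (y ^ N / N ^ (n + 1))) x ∂ν := by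
          refine setLIntegral_congr_fun measurableSet_Ioc fun x hx => ?_
          simp_rw [indicator_cons_antitone_le N hx.1]
          rw [lintegral_const_mul _ ((measurable_orderedWeight N).indicator
            (measurableSet_antitone_le x)), ih hx.1.le hx.2, indicator_mul_left]
      _ = _ := by
          rw [lintegral_indicator measurableSet_Ioc,
            Measure.restrict_restrict_of_subset (Ioc_subset_Ioc le_rfl hc1),
            lintegral_Ioc_inv_mul_pow_div hN hc0 _, ← pow_succ']

theorem lintegral_antitone_card_orderedWeight {N : ℕ} (hN : 0 < N) {a : ℝ} (ha : 0 < a)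
    (q n : ℕ) (hqn : q ≤ n) {b : ℝ} (hab : a ≤ b) (hb : b ≤ 1) :
    ∫⁻ u, {u : Fin (n + 1) → ℝ | Antitone u ∧ u 0 ≤ b ∧ #{i | a < u i} = q}.indicator
        (orderedWeight N) u ∂(Measure.pi fun _ => ν) =
      ENNReal.ofReal ((Real.log b - Real.log a) ^ q / q.factorial * (a ^ N / N ^ (n + 1 - q))) := by
  induction q generalizing n b with
  | zero =>
    have hset : {u : Fin (n + 1) → ℝ | Antitone u ∧ u 0 ≤ b ∧ #{i | a < u i} = 0} =
        {u | Antitone u ∧ u 0 ≤ a} := by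
      ext u
      simp only [mem_ofPred_eq, card_eq_zero, filter_eq_empty_iff, Finset.mem_univ, true_imp_iff,
        not_lt]
      exact ⟨fun ⟨hu, _, h⟩ => ⟨hu, @h 0⟩,
        fun ⟨hu, h⟩ => ⟨hu, h.trans hab, fun i => (hu (Fin.zero_le i)).trans h⟩⟩
    rw [hset, lintegral_antitone_le_orderedWeight hN n ha.le (hab.trans hb)]
    simp
  | succ q ih =>
    obtain ⟨m, rfl⟩ : ∃ m, n = m + 1 := ⟨n - 1, by omega⟩
    rw [lintegral_pi_eq_lintegral_cons _ ((measurable_orderedWeight N).indicator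
      (measurableSet_antitone_card a b (q + 1)))]
    calc _ = ∫⁻ x, (Ioc a b).indicator (fun y => ENNReal.ofReal y⁻¹ * ENNReal.ofReal
          ((Real.log y - Real.log a) ^ q / q.factorial * (a ^ N / N ^ (m + 1 - q)))) x ∂ν := by
          refine setLIntegral_congr_fun measurableSet_Ioc fun x hx => ?_
          simp_rw [indicator_cons_antitone_card N hx.1.le]
          rw [lintegral_const_mul _ ((measurable_orderedWeight N).indicator
            (measurableSet_antitone_card a x q)), indicator_mul_left]
          by_cases hxab : x ∈ Ioc a b
          · rw [ih m (by omega) hxab.1.le hx.2]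
          · simp [indicator_of_notMem hxab]
      _ = _ := by
          rw [lintegral_indicator measurableSet_Ioc,
            Measure.restrict_restrict_of_subset (Ioc_subset_Ioc ha.le hb),
            lintegral_Ioc_inv_mul_log_sub_pow_div_factorial q ha hab _,
            show m + 1 + 1 - (q + 1) = m + 1 - q by omega]

lemma card_filter_lt_comp {ι α β : Type*} [Fintype ι] [LinearOrder α] [LinearOrder β]
    {f : α → β} (hf : Monotone f) {v : ι → α} (hv : ∀ i y, f (v i) ≤ f y → v i ≤ y) (t : α) :
    #{i | t < v i} = #{i | f t < f (v i)} := by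
  congr 1
  exact filter_congr fun i _ => ⟨fun h => not_le.1 fun h' => h.not_ge (hv i t h'), hf.reflect_lt⟩

lemma antitone_comp_iff {ι α β : Type*} [Preorder ι] [LinearOrder α] [Preorder β]
    {f : α → β} (hf : Monotone f) {v : ι → α} (hv : ∀ i y, f (v i) ≤ f y → v i ≤ y) :
    Antitone (f ∘ v) ↔ Antitone v :=
  ⟨fun h _ _ hij => hv _ _ (h hij), hf.comp_antitone⟩

lemma indicator_density_eq_orderedWeight_cdf (μ : Measure ℝ) [IsProbabilityMeasure μ] {n p : ℕ}
    (t : ℝ) {v : Fin (n + 1) → ℝ} (hv : ∀ i y, cdf μ (v i) ≤ cdf μ y → v i ≤ y) :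
    {v : Fin (n + 1) → ℝ | #{i | t < v i} = p}.indicator (fun v => ENNReal.ofReal
      (if Antitone v ∧ ∀ i, cdf μ (v i) ≠ 0 then
        ((n + 1 : ℕ) : ℝ) ^ (n + 1) * ∏ i, cdf μ (v (Fin.last n)) / cdf μ (v i) else 0)) v =
      ENNReal.ofReal (((n + 1 : ℕ) : ℝ) ^ (n + 1)) *
        {u : Fin (n + 1) → ℝ | Antitone u ∧ u 0 ≤ 1 ∧ #{i | cdf μ t < u i} = p}.indicator
          (orderedWeight (n + 1)) (fun i => cdf μ (v i)) := by
  -- `cdf μ (v i) = 0` would give `cdf μ (v i) ≤ cdf μ (v i - 1)`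
  have hpos : ∀ i, cdf μ (v i) ≠ 0 := fun i h => by
    linarith [hv i (v i - 1) (h ▸ cdf_nonneg μ _)]
  have hanti := antitone_comp_iff (monotone_cdf μ) hv
  simp only [Function.comp_def] at hanti
  simp only [indicator_apply, mem_ofPred_eq, hanti, cdf_le_one, ne_eq, hpos, not_false_eq_true,
    implies_true, and_true, true_and, card_filter_lt_comp (monotone_cdf μ) hv t]
  by_cases hA : Antitone v <;> by_cases hc : #{i | cdf μ t < cdf μ (v i)} = p <;>
    simp only [hA, hc, if_true, if_false, and_true, and_false, ENNReal.ofReal_zero, mul_zero]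
  rw [orderedWeight, ← ENNReal.ofReal_mul (by positivity)]
  simp only [div_eq_mul_inv, prod_mul_distrib, prod_const, card_univ, Fintype.card_fin]
  ring_nf

/-- **Exceedance probabilities under `μ_N`.**
Let `μ` be an atomless probability measure on `ℝ` with distribution function `F` and let
`μ_N` be the measure on `ℝ^N` with density `N^N 1_{t_1 ≥ ⋯ ≥ t_N} ∏_i F(t_N)/F(t_i)`
with respect to `μ^{⊗N}`.  For every `t` with `F(t) > 0` and every `0 ≤ p ≤ N - 1`, the
`μ_N`-measure of the set of vectors with exactly `p` coordinates `> t` equals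
`(N^p / p!) F(t)^N (-log F(t))^p`. -/
theorem muN_measure_exactly_p_exceed (μ : Measure ℝ) [IsProbabilityMeasure μ] [NullSingletonClass μ]
    (N : ℕ) (hN : 1 ≤ N) (t : ℝ) (ht : 0 < cdf' μ t) (p : ℕ) (hp : p ≤ N - 1) :
    ((Measure.pi fun _ : Fin N => μ).withDensity fun v =>
        ENNReal.ofReal
          (if Antitone v ∧ ∀ i : Fin N, cdf' μ (v i) ≠ 0 then
            (N : ℝ) ^ N * ∏ i : Fin N, cdf' μ (v ⟨N - 1, by omega⟩) / cdf' μ (v i)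
          else 0))
      {v : Fin N → ℝ | (Finset.univ.filter fun i : Fin N => t < v i).card = p} =
        ENNReal.ofReal
          ((N : ℝ) ^ p / (p.factorial : ℝ) * cdf' μ t ^ N * (-Real.log (cdf' μ t)) ^ p) := by
  obtain ⟨n, rfl⟩ : ∃ n, N = n + 1 := ⟨N - 1, by omega⟩
  rw [cdf'_eq_cdf] at ht ⊢
  set S : Set (Fin (n + 1) → ℝ) := {u | Antitone u ∧ u 0 ≤ 1 ∧ #{i | cdf μ t < u i} = p}
  have hS : MeasurableSet {v : Fin (n + 1) → ℝ | #{i | t < v i} = p} :=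
    measurable_card_filter_lt t (measurableSet_singleton p)
  have hF : Measurable fun (v : Fin (n + 1) → ℝ) i => cdf μ (v i) :=
    measurable_pi_lambda _ fun i => (continuous_cdf μ).measurable.comp (measurable_pi_apply i)
  rw [withDensity_apply _ hS, ← lintegral_indicator hS]
  calc _ = ∫⁻ v, ENNReal.ofReal (((n + 1 : ℕ) : ℝ) ^ (n + 1)) *
          S.indicator (orderedWeight (n + 1)) (fun i => cdf μ (v i)) ∂(Measure.pi fun _ => μ) := by
        refine lintegral_congr_ae ?_
        filter_upwards [ae_all_iff.2 fun i => (Measure.tendsto_eval_ae_ae (i := i)).eventually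
          (ae_le_of_cdf_le μ)] with v hv
        exact indicator_density_eq_orderedWeight_cdf μ t hv
    _ = ENNReal.ofReal (((n + 1 : ℕ) : ℝ) ^ (n + 1)) *
          ∫⁻ u, S.indicator (orderedWeight (n + 1)) u ∂(Measure.pi fun _ => ν) := by
        rw [lintegral_const_mul' _ _ ENNReal.ofReal_ne_top,
          ← lintegral_map ((measurable_orderedWeight _).indicator
            (measurableSet_antitone_card (cdf μ t) 1 p)) hF,
          Measure.pi_map_pi fun _ => (continuous_cdf μ).measurable.aemeasurable, map_cdf]
    _ = _ := by
        rw [lintegral_antitone_card_orderedWeight (by omega) ht p n (by omega) (cdf_le_one μ t)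
          le_rfl, Real.log_one, zero_sub, ← ENNReal.ofReal_mul (by positivity),
          ← pow_sub_mul_pow _ (show p ≤ n + 1 by omega)]
        congr 1
        field_simp
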